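/- arXiv:1710.02999 — 6 statements merged into one kernel-verified Lean document; each statement's English description precedes it below -/
import Mathlib

section
/- Let p be a semi-definite point of a positive semi-definite metric ds² on a 2-manifold, let Θ be the Kossowski pseudo-connection, and let V₁, V₂, V₃ be smooth vector fields with V₃(p) lying in the null space 𝒩_p of ds² at p. Then for any smooth function f, Θ(V₁, f V₂, V₃)(p) = f(p) · Θ(V₁, V₂, V₃)(p); consequently, Θ(V₁,V₂,V₃)(p) depends only on the values V₁(p), V₂(p), V₃(p), defining a trilinear map T_pM² × T_pM² × 𝒩_p → ℝ. -/
noncomputable section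

/-- Points of the 2-manifold (modelled on a coordinate chart). -/
abbrev R2 := ℝ × ℝ

/-- Action of a vector field `X` on a function `f`: `X f = df(X)`. -/
def vact (X : R2 → R2) (f : R2 → ℝ) : R2 → ℝ := fun p => fderiv ℝ f p (X p)

/-- Lie bracket of vector fields. -/
def vbracket (X Y : R2 → R2) : R2 → R2 :=
  fun p => fderiv ℝ Y p (X p) - fderiv ℝ X p (Y p)

/-- The function `⟨X,Y⟩ = ds²(X,Y)` for a (semi-definite) metric `g`. -/
def minner (g : R2 → R2 → R2 → ℝ) (X Y : R2 → R2) : R2 → ℝ := fun p => g p (X p) (Y p)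

/-- Kossowski pseudo-connection:
`2Θ(X,Y,Z) = X⟨Y,Z⟩ + Y⟨X,Z⟩ − Z⟨X,Y⟩ + ⟨[X,Y],Z⟩ − ⟨[X,Z],Y⟩ − ⟨[Y,Z],X⟩`. -/
def Theta (g : R2 → R2 → R2 → ℝ) (X Y Z : R2 → R2) : R2 → ℝ := fun p =>
  (1 / 2) * (vact X (minner g Y Z) p + vact Y (minner g X Z) p - vact Z (minner g X Y) p
    + minner g (vbracket X Y) Z p - minner g (vbracket X Z) Y p
    - minner g (vbracket Y Z) X p)


/-- at a semi-definite point `p`, if `V₃(p)` lies in the null space of the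
metric at `p`, then `Θ(V₁, f·V₂, V₃)(p) = f(p)·Θ(V₁,V₂,V₃)(p)`; consequently
`Θ(V₁,V₂,V₃)(p)` depends only on the values `V₁(p), V₂(p), V₃(p)`. -/
lemma gdiff (g : R2 → R2 → R2 → ℝ)
    (hg : ContDiff ℝ (⊤ : ℕ∞) fun q : R2 × R2 × R2 => g q.1 q.2.1 q.2.2)
    (a b p : R2) : DifferentiableAt ℝ (fun q => g q a b) p := by
  have h : (fun q : R2 => g q a b) =
      (fun q : R2 × R2 × R2 => g q.1 q.2.1 q.2.2) ∘ (fun q : R2 => (q, a, b)) := rfl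
  rw [h]
  exact ((hg.differentiable (by simp)) _).comp p
    (differentiableAt_id.prodMk (differentiableAt_const _))

lemma key (g : R2 → R2 → R2 → ℝ)
    (hg : ContDiff ℝ (⊤ : ℕ∞) fun q : R2 × R2 × R2 => g q.1 q.2.1 q.2.2)
    (hbil : ∀ (p : R2) (y : R2), IsLinearMap ℝ fun x : R2 => g p x y)
    (hsymm : ∀ (p : R2) (x y : R2), g p x y = g p y x)
    (p : R2) (A B : R2 → R2) (hA : ContDiff ℝ (⊤ : ℕ∞) A) (hB : ContDiff ℝ (⊤ : ℕ∞) B) (u : R2) :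
    fderiv ℝ (minner g A B) p u =
      fderiv ℝ (fun q => g q (A p) (B p)) p u
      + g p (fderiv ℝ A p u) (B p) + g p (A p) (fderiv ℝ B p u) := by
  set L := fderiv ℝ (fun q : R2 × R2 × R2 => g q.1 q.2.1 q.2.2) (p, A p, B p) with hL
  have hGd : HasFDerivAt (fun q : R2 × R2 × R2 => g q.1 q.2.1 q.2.2) L (p, A p, B p) :=
    ((hg.differentiable (by simp)) _).hasFDerivAt
  have hφ : HasFDerivAt (fun q : R2 => ((q, A q, B q) : R2 × R2 × R2))
      ((ContinuousLinearMap.id ℝ R2).prod ((fderiv ℝ A p).prod (fderiv ℝ B p))) p :=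
    (hasFDerivAt_id p).prodMk (HasFDerivAt.prodMk ((hA.differentiable (by simp) p).hasFDerivAt)
      ((hB.differentiable (by simp) p).hasFDerivAt))
  have hcomp := (hGd.comp p hφ).fderiv
  have h1 : fderiv ℝ (minner g A B) p u = L (u, fderiv ℝ A p u, fderiv ℝ B p u) := by
    have : minner g A B = (fun q : R2 × R2 × R2 => g q.1 q.2.1 q.2.2) ∘
        (fun q : R2 => ((q, A q, B q) : R2 × R2 × R2)) := rfl
    rw [this, hcomp]; rfl
  have hψ : HasFDerivAt (fun q : R2 => ((q, A p, B p) : R2 × R2 × R2))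
      ((ContinuousLinearMap.id ℝ R2).prod 0) p :=
    (hasFDerivAt_id p).prodMk (hasFDerivAt_const _ p)
  have h2 : fderiv ℝ (fun q => g q (A p) (B p)) p u = L (u, 0, 0) := by
    have h : (fun q : R2 => g q (A p) (B p)) =
        (fun q : R2 × R2 × R2 => g q.1 q.2.1 q.2.2) ∘ (fun q : R2 => ((q, A p, B p) : R2 × R2 × R2)) := rfl
    rw [h, (hGd.comp p hψ).fderiv]; rfl
  have h3 : ∀ v : R2, L ((0:R2), v, (0:R2)) = g p v (B p) := by
    intro v
    have hc : HasDerivAt (fun t : ℝ => ((p, A p + t • v, B p) : R2 × R2 × R2))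
        (((0:R2), v, (0:R2)) : R2 × R2 × R2) 0 := by
      refine (hasDerivAt_const _ _).prodMk (HasDerivAt.prodMk ?_ (hasDerivAt_const _ _))
      simpa using ((hasDerivAt_id (0:ℝ)).smul_const v).const_add (A p)
    have hGd' : HasFDerivAt (fun q : R2 × R2 × R2 => g q.1 q.2.1 q.2.2) L
        (p, A p + (0:ℝ) • v, B p) := by simpa using hGd
    have hg1 : HasDerivAt (fun t : ℝ => g p (A p + t • v) (B p)) (L (0, v, 0)) 0 := by
      exact (hGd'.comp_hasDerivAt 0 hc)
    have hg2 : HasDerivAt (fun t : ℝ => g p (A p + t • v) (B p)) (g p v (B p)) 0 := by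
      have he : (fun t : ℝ => g p (A p + t • v) (B p))
          = fun t : ℝ => g p (A p) (B p) + t * g p v (B p) := by
        funext t
        rw [(hbil p (B p)).map_add, (hbil p (B p)).map_smul]
        simp [smul_eq_mul]
      rw [he]
      simpa using ((hasDerivAt_id (0:ℝ)).mul_const (g p v (B p))).const_add (g p (A p) (B p))
    exact hg1.unique hg2
  have h4 : ∀ w : R2, L ((0:R2), (0:R2), w) = g p (A p) w := by
    intro w
    have hc : HasDerivAt (fun t : ℝ => ((p, A p, B p + t • w) : R2 × R2 × R2))
        (((0:R2), (0:R2), w) : R2 × R2 × R2) 0 := by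
      refine (hasDerivAt_const _ _).prodMk (HasDerivAt.prodMk (hasDerivAt_const _ _) ?_)
      simpa using ((hasDerivAt_id (0:ℝ)).smul_const w).const_add (B p)
    have hGd' : HasFDerivAt (fun q : R2 × R2 × R2 => g q.1 q.2.1 q.2.2) L
        (p, A p, B p + (0:ℝ) • w) := by simpa using hGd
    have hg1 : HasDerivAt (fun t : ℝ => g p (A p) (B p + t • w)) (L (0, 0, w)) 0 := by
      exact (hGd'.comp_hasDerivAt 0 hc)
    have hg2 : HasDerivAt (fun t : ℝ => g p (A p) (B p + t • w)) (g p (A p) w) 0 := by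
      have he : (fun t : ℝ => g p (A p) (B p + t • w))
          = fun t : ℝ => g p (A p) (B p) + t * g p (A p) w := by
        funext t
        rw [hsymm p (A p) (B p + t • w), (hbil p (A p)).map_add, (hbil p (A p)).map_smul,
          hsymm p (B p) (A p), hsymm p w (A p)]
        simp [smul_eq_mul]
      rw [he]
      simpa using ((hasDerivAt_id (0:ℝ)).mul_const (g p (A p) w)).const_add (g p (A p) (B p))
    exact hg1.unique hg2
  have hdecomp : ((u, fderiv ℝ A p u, fderiv ℝ B p u) : R2 × R2 × R2)
      = ((u, (0:R2), (0:R2)) : R2 × R2 × R2) + ((0:R2), fderiv ℝ A p u, (0:R2))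
        + ((0:R2), (0:R2), fderiv ℝ B p u) := by
    simp [Prod.ext_iff]
  rw [h1, hdecomp, map_add, map_add, h3, h4, h2]

lemma theta_formula (g : R2 → R2 → R2 → ℝ)
    (hg : ContDiff ℝ (⊤ : ℕ∞) fun q : R2 × R2 × R2 => g q.1 q.2.1 q.2.2)
    (hbil : ∀ (p : R2) (y : R2), IsLinearMap ℝ fun x : R2 => g p x y)
    (hsymm : ∀ (p : R2) (x y : R2), g p x y = g p y x)
    (p : R2) (X Y Z : R2 → R2)
    (hX : ContDiff ℝ (⊤ : ℕ∞) X) (hY : ContDiff ℝ (⊤ : ℕ∞) Y) (hZ : ContDiff ℝ (⊤ : ℕ∞) Z) :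
    Theta g X Y Z p = (1/2) * (fderiv ℝ (fun q => g q (Y p) (Z p)) p (X p)
      + fderiv ℝ (fun q => g q (X p) (Z p)) p (Y p)
      - fderiv ℝ (fun q => g q (X p) (Y p)) p (Z p))
      + g p (fderiv ℝ Y p (X p)) (Z p) := by
  have kYZ := key g hg hbil hsymm p Y Z hY hZ (X p)
  have kXZ := key g hg hbil hsymm p X Z hX hZ (Y p)
  have kXY := key g hg hbil hsymm p X Y hX hY (Z p)
  have hsub : ∀ a b c : R2, g p (a - b) c = g p a c - g p b c := fun a b c =>
    (hbil p c).map_sub a b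
  simp only [Theta, vact]
  rw [kYZ, kXZ, kXY]
  simp only [minner, vbracket]
  rw [hsub, hsub, hsub,
    hsymm p (Y p) (fderiv ℝ Z p (X p)), hsymm p (X p) (fderiv ℝ Z p (Y p)),
    hsymm p (X p) (fderiv ℝ Y p (Z p))]
  ring
/-- STMT3 -/
theorem stmt_3 (g : R2 → R2 → R2 → ℝ)
    (hg : ContDiff ℝ (⊤ : ℕ∞) fun q : R2 × R2 × R2 => g q.1 q.2.1 q.2.2)
    (hbil : ∀ (p : R2) (y : R2), IsLinearMap ℝ fun x : R2 => g p x y)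
    (hsymm : ∀ (p : R2) (x y : R2), g p x y = g p y x)
    (hpos : ∀ (p : R2) (x : R2), 0 ≤ g p x x)
    (p : R2)
    (hsd : ∃ v : R2, v ≠ 0 ∧ ∀ w : R2, g p v w = 0)  -- `p` is a semi-definite point
    (V₁ V₂ V₃ : R2 → R2)
    (hV₁ : ContDiff ℝ (⊤ : ℕ∞) V₁) (hV₂ : ContDiff ℝ (⊤ : ℕ∞) V₂) (hV₃ : ContDiff ℝ (⊤ : ℕ∞) V₃)
    (hnull : ∀ w : R2, g p (V₃ p) w = 0)  -- `V₃(p) ∈ 𝒩_p`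
    (f : R2 → ℝ) (hf : ContDiff ℝ (⊤ : ℕ∞) f) :
    Theta g V₁ (fun q => f q • V₂ q) V₃ p = f p * Theta g V₁ V₂ V₃ p ∧
    ∀ W₁ W₂ W₃ : R2 → R2, ContDiff ℝ (⊤ : ℕ∞) W₁ → ContDiff ℝ (⊤ : ℕ∞) W₂ → ContDiff ℝ (⊤ : ℕ∞) W₃ →
      W₁ p = V₁ p → W₂ p = V₂ p → W₃ p = V₃ p →
      Theta g W₁ W₂ W₃ p = Theta g V₁ V₂ V₃ p := by
  have hnull' : ∀ w : R2, g p w (V₃ p) = 0 := fun w =>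
    (hsymm p w (V₃ p)).trans (hnull w)
  constructor
  · have hfV₂ : ContDiff ℝ (⊤ : ℕ∞) (fun q => f q • V₂ q) := hf.smul hV₂
    rw [theta_formula g hg hbil hsymm p V₁ (fun q => f q • V₂ q) V₃ hV₁ hfV₂ hV₃,
        theta_formula g hg hbil hsymm p V₁ V₂ V₃ hV₁ hV₂ hV₃]
    rw [hnull' (fderiv ℝ (fun q => f q • V₂ q) p (V₁ p)), hnull' (fderiv ℝ V₂ p (V₁ p))]
    have e1 : fderiv ℝ (fun q => g q ((fun q => f q • V₂ q) p) (V₃ p)) p (V₁ p)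
        = f p * fderiv ℝ (fun q => g q (V₂ p) (V₃ p)) p (V₁ p) := by
      have hfun : (fun q => g q ((fun q => f q • V₂ q) p) (V₃ p))
          = fun q => f p • g q (V₂ p) (V₃ p) := by
        funext q; exact (hbil q (V₃ p)).map_smul (f p) (V₂ p)
      rw [hfun, fderiv_fun_const_smul (gdiff g hg (V₂ p) (V₃ p) p) (f p)]
      simp [smul_eq_mul]
    have e2 : fderiv ℝ (fun q => g q (V₁ p) (V₃ p)) p ((fun q => f q • V₂ q) p)
        = f p * fderiv ℝ (fun q => g q (V₁ p) (V₃ p)) p (V₂ p) := by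
      show fderiv ℝ (fun q => g q (V₁ p) (V₃ p)) p (f p • V₂ p) = _
      rw [(fderiv ℝ (fun q => g q (V₁ p) (V₃ p)) p).map_smul]
      simp [smul_eq_mul]
    have e3 : fderiv ℝ (fun q => g q (V₁ p) ((fun q => f q • V₂ q) p)) p (V₃ p)
        = f p * fderiv ℝ (fun q => g q (V₁ p) (V₂ p)) p (V₃ p) := by
      have hfun : (fun q => g q (V₁ p) ((fun q => f q • V₂ q) p))
          = fun q => f p • g q (V₁ p) (V₂ p) := by
        funext q
        show g q (V₁ p) (f p • V₂ p) = _
        rw [hsymm q (V₁ p) (f p • V₂ p), (hbil q (V₁ p)).map_smul (f p) (V₂ p),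
          hsymm q (V₂ p) (V₁ p)]
      rw [hfun, fderiv_fun_const_smul (gdiff g hg (V₁ p) (V₂ p) p) (f p)]
      simp [smul_eq_mul]
    rw [e1, e2, e3]
    ring
  · intro W₁ W₂ W₃ hW₁ hW₂ hW₃ e₁ e₂ e₃
    rw [theta_formula g hg hbil hsymm p W₁ W₂ W₃ hW₁ hW₂ hW₃,
        theta_formula g hg hbil hsymm p V₁ V₂ V₃ hV₁ hV₂ hV₃, e₁, e₂, e₃,
        hnull' (fderiv ℝ W₂ p (V₁ p)), hnull' (fderiv ℝ V₂ p (V₁ p))]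


end
end

section
/- Let ds² = E du² + 2F du dv + G dv² be a positive semi-definite metric germ at a rank-one semi-definite point p = (0,0) in a coordinate system adjusted at p (i.e. ∂_v is a null vector at p). Then p is admissible (the induced trilinear map Θ̂_p vanishes) if and only if F = G = 0, E_v = 2F_u, and G_u = G_v = 0 hold at p. -/
noncomputable section

/-- The metric `E du² + 2F du dv + G dv²` as a field of symmetric bilinear forms. -/
def metric2 (E F G : R2 → ℝ) : R2 → R2 → R2 → ℝ := fun p x y =>
  E p * x.1 * y.1 + F p * (x.1 * y.2 + x.2 * y.1) + G p * x.2 * y.2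

/-- Auxiliary: decomposition of a linear functional on `ℝ × ℝ` along the basis. -/
lemma lin_decomp (L : R2 →L[ℝ] ℝ) (a : R2) :
    L a = a.1 * L (1, 0) + a.2 * L (0, 1) := by
  have ha : a = a.1 • ((1, 0) : R2) + a.2 • ((0, 1) : R2) := by
    ext <;> simp
  conv_lhs => rw [ha]
  rw [map_add, map_smul, map_smul, smul_eq_mul, smul_eq_mul]

/-- Auxiliary: explicit formula for the derivative of `minner (metric2 E F G) X Y`. -/
lemma fderiv_minner_apply (E F G : R2 → ℝ) (X Y : R2 → R2) (z w : R2)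
    (hE : DifferentiableAt ℝ E z) (hF : DifferentiableAt ℝ F z)
    (hG : DifferentiableAt ℝ G z) (hX : DifferentiableAt ℝ X z)
    (hY : DifferentiableAt ℝ Y z) :
    fderiv ℝ (minner (metric2 E F G) X Y) z w =
      fderiv ℝ E z w * (X z).1 * (Y z).1
      + E z * ((fderiv ℝ X z w).1 * (Y z).1 + (X z).1 * (fderiv ℝ Y z w).1)
      + fderiv ℝ F z w * ((X z).1 * (Y z).2 + (X z).2 * (Y z).1)
      + F z * ((fderiv ℝ X z w).1 * (Y z).2 + (X z).1 * (fderiv ℝ Y z w).2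
          + (fderiv ℝ X z w).2 * (Y z).1 + (X z).2 * (fderiv ℝ Y z w).1)
      + fderiv ℝ G z w * ((X z).2 * (Y z).2)
      + G z * ((fderiv ℝ X z w).2 * (Y z).2 + (X z).2 * (fderiv ℝ Y z w).2) := by
  have hX1 := hX.hasFDerivAt.fst
  have hX2 := hX.hasFDerivAt.snd
  have hY1 := hY.hasFDerivAt.fst
  have hY2 := hY.hasFDerivAt.snd
  have h1 := (hE.hasFDerivAt.mul hX1).mul hY1
  have h2 := hF.hasFDerivAt.mul ((hX1.mul hY2).add (hX2.mul hY1))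
  have h3 := (hG.hasFDerivAt.mul hX2).mul hY2
  have h := (h1.add h2).add h3
  have heq : minner (metric2 E F G) X Y =
      fun p => E p * (X p).1 * (Y p).1
        + F p * ((X p).1 * (Y p).2 + (X p).2 * (Y p).1)
        + G p * (X p).2 * (Y p).2 := rfl
  rw [heq, (show HasFDerivAt (fun p => E p * (X p).1 * (Y p).1
        + F p * ((X p).1 * (Y p).2 + (X p).2 * (Y p).1)
        + G p * (X p).2 * (Y p).2) _ z from h).fderiv]
  simp only [Pi.mul_apply, Pi.add_apply, ContinuousLinearMap.add_apply, ContinuousLinearMap.smul_apply,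
    ContinuousLinearMap.coe_comp', Function.comp_apply, ContinuousLinearMap.coe_fst',
    ContinuousLinearMap.coe_snd', smul_eq_mul]
  ring

/-- in coordinates adjusted at a rank-one semi-definite point
`p = (0,0)` (the null space is spanned by `∂_v`), the point `p` is admissible
(the induced trilinear map `Θ̂_p` vanishes) if and only if `F = G = 0`,
`E_v = 2F_u` and `G_u = G_v = 0` hold at `p`. -/
theorem stmt_4 (E F G : R2 → ℝ)
    (hE : ContDiff ℝ (⊤ : ℕ∞) E) (hF : ContDiff ℝ (⊤ : ℕ∞) F) (hG : ContDiff ℝ (⊤ : ℕ∞) G)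
    (hpos : ∀ (p : R2) (x : R2), 0 ≤ metric2 E F G p x x)
    -- adjusted rank-one semi-definite point: the null space at `(0,0)` is `{v : v.1 = 0}`,
    -- i.e. it is 1-dimensional and spanned by `∂_v`.
    (hnull : ∀ v : R2, (∀ w : R2, metric2 E F G (0, 0) v w = 0) ↔ v.1 = 0) :
    (∀ V₁ V₂ V₃ : R2 → R2, ContDiff ℝ (⊤ : ℕ∞) V₁ → ContDiff ℝ (⊤ : ℕ∞) V₂ → ContDiff ℝ (⊤ : ℕ∞) V₃ →
        (∀ w : R2, metric2 E F G (0, 0) (V₃ (0, 0)) w = 0) →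
        Theta (metric2 E F G) V₁ V₂ V₃ (0, 0) = 0)
    ↔ (F (0, 0) = 0 ∧ G (0, 0) = 0 ∧
        fderiv ℝ E (0, 0) (0, 1) = 2 * fderiv ℝ F (0, 0) (1, 0) ∧
        fderiv ℝ G (0, 0) (1, 0) = 0 ∧ fderiv ℝ G (0, 0) (0, 1) = 0) := by
  have hEd : DifferentiableAt ℝ E (0, 0) := (hE.differentiable (by simp)).differentiableAt
  have hFd : DifferentiableAt ℝ F (0, 0) := (hF.differentiable (by simp)).differentiableAt
  have hGd : DifferentiableAt ℝ G (0, 0) := (hG.differentiable (by simp)).differentiableAt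
  have hnull01 : ∀ w : R2, metric2 E F G (0, 0) ((0, 1) : R2) w = 0 := (hnull (0, 1)).mpr rfl
  have hF0 : F (0, 0) = 0 := by simpa [metric2] using hnull01 (1, 0)
  have hG0 : G (0, 0) = 0 := by simpa [metric2] using hnull01 (0, 1)
  have hGmin : IsLocalMin G ((0, 0) : R2) := by
    apply Filter.Eventually.of_forall
    intro x
    have h9 : 0 ≤ G x := by simpa [metric2] using hpos x (0, 1)
    show G (0, 0) ≤ G x
    rw [hG0]; exact h9
  have hdG : fderiv ℝ G (0, 0) = 0 := hGmin.fderiv_eq_zero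
  constructor
  · intro h
    refine ⟨hF0, hG0, ?_, by rw [hdG]; simp, by rw [hdG]; simp⟩
    have key := h (fun _ => (1, 0)) (fun _ => (1, 0)) (fun _ => (0, 1))
      contDiff_const contDiff_const contDiff_const hnull01
    have m1 : minner (metric2 E F G) (fun _ => ((1, 0) : R2)) (fun _ => ((0, 1) : R2)) = F := by
      funext p; simp [minner, metric2]
    have m2 : minner (metric2 E F G) (fun _ => ((1, 0) : R2)) (fun _ => ((1, 0) : R2)) = E := by
      funext p; simp [minner, metric2]
    simp only [Theta, vact, vbracket, minner, m1, m2, fderiv_const, Pi.zero_apply,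
      ContinuousLinearMap.zero_apply, metric2] at key
    norm_num at key
    show fderiv ℝ E (0, 0) (0, 1) = 2 * fderiv ℝ F (0, 0) (1, 0)
    linarith
  · rintro ⟨_, _, hEF, _, _⟩
    intro V₁ V₂ V₃ h1 h2 h3 hV3
    have hc1 : (V₃ (0, 0)).1 = 0 := (hnull _).mp hV3
    have h1d : DifferentiableAt ℝ V₁ (0, 0) := (h1.differentiable (by simp)).differentiableAt
    have h2d : DifferentiableAt ℝ V₂ (0, 0) := (h2.differentiable (by simp)).differentiableAt
    have h3d : DifferentiableAt ℝ V₃ (0, 0) := (h3.differentiable (by simp)).differentiableAt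
    simp only [Theta, vact]
    rw [fderiv_minner_apply E F G _ _ _ _ hEd hFd hGd h2d h3d,
      fderiv_minner_apply E F G _ _ _ _ hEd hFd hGd h1d h3d,
      fderiv_minner_apply E F G _ _ _ _ hEd hFd hGd h1d h2d]
    simp only [minner, vbracket, metric2, hdG, ContinuousLinearMap.zero_apply,
      Prod.fst_sub, Prod.snd_sub, hF0, hG0]
    rw [lin_decomp (fderiv ℝ E (0, 0)) (V₃ (0, 0)),
      lin_decomp (fderiv ℝ F (0, 0)) (V₁ (0, 0)),
      lin_decomp (fderiv ℝ F (0, 0)) (V₂ (0, 0)),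
      lin_decomp (fderiv ℝ F (0, 0)) (V₃ (0, 0))]
    rw [hc1, hEF]
    ring

end
end

section
/- Let ds² = E du² + 2F du dv + G dv² be a smooth Kossowski metric germ at a semi-definite point p, with signed area density λ satisfying EG − F² = λ² and ∇λ(p) ≠ 0. Then E(p) ≠ 0; in particular the null space 𝒩_p is exactly 1-dimensional. -/
noncomputable section
open Topology Filter

/-- for a smooth Kossowski metric germ (in coordinates adjusted at the
semi-definite point `p = (0,0)`, with the admissibility conditions) with signed area
density `λ` satisfying `EG − F² = λ²` and `∇λ(p) ≠ 0`, one has `E(p) ≠ 0`; in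
particular the null space `𝒩_p` is exactly 1-dimensional (it equals `{v : v.1 = 0}`). -/
theorem stmt_5 (U : Set R2) (hU : IsOpen U) (h0 : (0, 0) ∈ U)
    (E F G lam : R2 → ℝ)
    (hE : ContDiffOn ℝ (⊤ : ℕ∞) E U) (hF : ContDiffOn ℝ (⊤ : ℕ∞) F U)
    (hG : ContDiffOn ℝ (⊤ : ℕ∞) G U) (hlam : ContDiffOn ℝ (⊤ : ℕ∞) lam U)
    (hpos : ∀ p ∈ U, ∀ x : R2, 0 ≤ metric2 E F G p x x)
    -- adjusted coordinates and admissibility at `p = (0,0)`: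
    (hF0 : F (0, 0) = 0) (hG0 : G (0, 0) = 0)
    (hGu : fderiv ℝ G (0, 0) (1, 0) = 0) (hGv : fderiv ℝ G (0, 0) (0, 1) = 0)
    (hEv : fderiv ℝ E (0, 0) (0, 1) = 2 * fderiv ℝ F (0, 0) (1, 0))
    -- signed area density:
    (hsq : ∀ p ∈ U, E p * G p - F p ^ 2 = lam p ^ 2)
    (hl0 : lam (0, 0) = 0)
    (hgrad : fderiv ℝ lam (0, 0) ≠ 0) :
    E (0, 0) ≠ 0 ∧
      ∀ v : R2, (∀ w : R2, metric2 E F G (0, 0) v w = 0) ↔ v.1 = 0 := by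
  have hF0' : F (0 : R2) = 0 := hF0
  have hG0' : G (0 : R2) = 0 := hG0
  have hl0' : lam (0 : R2) = 0 := hl0
  have hEnn : ∀ p ∈ U, 0 ≤ E p := by
    intro p hp
    have := hpos p hp (1, 0)
    simpa [metric2] using this
  have hGnn : ∀ p ∈ U, 0 ≤ G p := by
    intro p hp
    have := hpos p hp (0, 1)
    simpa [metric2] using this
  have hEd : DifferentiableAt ℝ E (0, 0) :=
    (hE.contDiffAt (hU.mem_nhds h0)).differentiableAt (by simp)
  have hGd : DifferentiableAt ℝ G (0, 0) :=
    (hG.contDiffAt (hU.mem_nhds h0)).differentiableAt (by simp)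
  have hlamd : DifferentiableAt ℝ lam (0, 0) :=
    (hlam.contDiffAt (hU.mem_nhds h0)).differentiableAt (by simp)
  have hDG : fderiv ℝ G (0, 0) = 0 := by
    refine ContinuousLinearMap.ext fun v => ?_
    have hv : v = v.1 • ((1 : ℝ), (0 : ℝ)) + v.2 • ((0 : ℝ), (1 : ℝ)) := by
      ext <;> simp
    rw [hv]
    simp only [map_add, map_smul, hGu, hGv, smul_eq_mul, mul_zero, add_zero,
      ContinuousLinearMap.zero_apply]
  have hEne : E (0, 0) ≠ 0 := by
    intro hE0
    have hDE : fderiv ℝ E (0, 0) = 0 := by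
      have hmin : IsLocalMin E (0, 0) := by
        refine Filter.eventually_of_mem (hU.mem_nhds h0) fun x hx => ?_
        rw [hE0]; exact hEnn x hx
      exact hmin.fderiv_eq_zero
    have hE0' : E (0 : R2) = 0 := hE0
    apply hgrad
    refine ContinuousLinearMap.ext fun v => ?_
    have hline : HasDerivAt (fun t : ℝ => t • v) v 0 := by
      simpa using (hasDerivAt_id (0 : ℝ)).smul_const v
    have h0v : ((0 : ℝ) • v) = ((0, 0) : R2) := by
      simp [Prod.ext_iff]
    -- derivatives of the restrictions to the line t ↦ t • v
    have mkDer : ∀ (f : R2 → ℝ), DifferentiableAt ℝ f (0, 0) →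
        HasDerivAt (fun t : ℝ => f (t • v)) (fderiv ℝ f (0, 0) v) 0 := by
      intro f hf
      have hfd : HasFDerivAt f (fderiv ℝ f (0, 0)) ((0 : ℝ) • v) := by
        rw [h0v]; exact hf.hasFDerivAt
      exact hfd.comp_hasDerivAt 0 hline
    have hEder : HasDerivAt (fun t : ℝ => E (t • v)) 0 0 := by
      have h := mkDer E hEd
      rw [hDE] at h
      simpa using h
    have hGder : HasDerivAt (fun t : ℝ => G (t • v)) 0 0 := by
      have h := mkDer G hGd
      rw [hDG] at h
      simpa using h
    have hLder := mkDer lam hlamd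
    -- eventual membership in U
    have hmemU : ∀ᶠ t in 𝓝 (0 : ℝ), t • v ∈ U := by
      have hcont : ContinuousAt (fun t : ℝ => t • v) 0 :=
        (continuous_id.smul continuous_const).continuousAt
      have : U ∈ 𝓝 ((0 : ℝ) • v) := by rw [h0v]; exact hU.mem_nhds h0
      exact hcont this
    -- slopes
    have slopeE : Filter.Tendsto (fun t : ℝ => E (t • v) / t) (𝓝[≠] 0) (𝓝 0) := by
      have := hasDerivAt_iff_tendsto_slope.mp hEder
      refine this.congr (fun t => ?_)
      simp [slope_def_field, h0v, hE0, hE0']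
    have slopeG : Filter.Tendsto (fun t : ℝ => G (t • v) / t) (𝓝[≠] 0) (𝓝 0) := by
      have := hasDerivAt_iff_tendsto_slope.mp hGder
      refine this.congr (fun t => ?_)
      simp [slope_def_field, h0v, hG0, hG0']
    have slopeL : Filter.Tendsto (fun t : ℝ => lam (t • v) / t) (𝓝[≠] 0)
        (𝓝 (fderiv ℝ lam (0, 0) v)) := by
      have := hasDerivAt_iff_tendsto_slope.mp hLder
      refine this.congr (fun t => ?_)
      simp [slope_def_field, h0v, hl0, hl0']
    -- squeeze: (lam / t)^2 ≤ (E/t) * (G/t) → 0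
    have hEGlim : Filter.Tendsto (fun t : ℝ => (E (t • v) / t) * (G (t • v) / t))
        (𝓝[≠] 0) (𝓝 0) := by
      simpa using slopeE.mul slopeG
    have hsqlim : Filter.Tendsto (fun t : ℝ => (lam (t • v) / t) ^ 2) (𝓝[≠] 0) (𝓝 0) := by
      refine squeeze_zero' ?_ ?_ hEGlim
      · exact Filter.Eventually.of_forall fun t => sq_nonneg _
      · have hUt : ∀ᶠ t in 𝓝[≠] (0 : ℝ), t • v ∈ U := nhdsWithin_le_nhds hmemU
        have hne : ∀ᶠ t in 𝓝[≠] (0 : ℝ), t ∈ ({0}ᶜ : Set ℝ) := eventually_mem_nhdsWithin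
        refine (hUt.and hne).mono fun t ht => ?_
        obtain ⟨htU, htne⟩ := ht
        have h1 : lam (t • v) ^ 2 ≤ E (t • v) * G (t • v) := by
          have := hsq _ htU
          nlinarith [sq_nonneg (F (t • v))]
        have ht2 : (0 : ℝ) < t ^ 2 := by
          have : t ≠ 0 := htne
          positivity
        calc (lam (t • v) / t) ^ 2 = lam (t • v) ^ 2 / t ^ 2 := by
              rw [div_pow]
          _ ≤ (E (t • v) * G (t • v)) / t ^ 2 := by gcongr
          _ = (E (t • v) / t) * (G (t • v) / t) := by
              rw [div_mul_div_comm, ← pow_two]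
    have hlimsq : Filter.Tendsto (fun t : ℝ => (lam (t • v) / t) ^ 2) (𝓝[≠] 0)
        (𝓝 ((fderiv ℝ lam (0, 0) v) ^ 2)) := slopeL.pow 2
    have : (fderiv ℝ lam (0, 0) v) ^ 2 = 0 :=
      tendsto_nhds_unique hlimsq hsqlim
    simpa using pow_eq_zero_iff (n := 2) (by norm_num) |>.mp this
  have hEne' : E (0 : R2) ≠ 0 := hEne
  refine ⟨hEne, fun v => ⟨fun h => ?_, fun h w => ?_⟩⟩
  · have h2 : E (0, 0) * v.1 = 0 := by
      have h1 := h (1, 0)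
      simp only [metric2] at h1
      rw [hF0, hG0] at h1
      linarith
    exact (mul_eq_zero.mp h2).resolve_left hEne
  · simp only [metric2]
    rw [hF0, hG0, h]
    ring


end
end

section
/- Let E, F, G be smooth functions near p with F(p)=G(p)=0, G_u(p)=G_v(p)=0, E(p) arbitrary, and let λ be smooth with EG − F² = λ² identically and λ(p)=0. Then 2λ_u(p)² = E(p)G_{uu}(p) − 2F_u(p)² and 2λ_v(p)² = E(p)G_{vv}(p) − 2F_v(p)². -/
noncomputable section
open Topology Filter

/-- Partial derivative in the `u`-direction. -/
def Du (f : R2 → ℝ) : R2 → ℝ := fun p => fderiv ℝ f p (1, 0)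

/-- Partial derivative in the `v`-direction. -/
def Dv (f : R2 → ℝ) : R2 → ℝ := fun p => fderiv ℝ f p (0, 1)

/-- One-dimensional key computation. -/
lemma key1 (s : Set ℝ) (hs : IsOpen s) (h0 : (0:ℝ) ∈ s)
    (e f g l : ℝ → ℝ)
    (he : ContDiffOn ℝ (⊤ : ℕ∞) e s) (hf : ContDiffOn ℝ (⊤ : ℕ∞) f s)
    (hg : ContDiffOn ℝ (⊤ : ℕ∞) g s) (hl : ContDiffOn ℝ (⊤ : ℕ∞) l s)
    (hf0 : f 0 = 0) (hg0 : g 0 = 0) (hg1 : deriv g 0 = 0) (hl0 : l 0 = 0)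
    (hid : ∀ t ∈ s, e t * g t - f t ^ 2 = l t ^ 2) :
    2 * (deriv l 0) ^ 2 = e 0 * deriv (deriv g) 0 - 2 * (deriv f 0) ^ 2 := by
  have hd : ∀ (φ : ℝ → ℝ), ContDiffOn ℝ (⊤ : ℕ∞) φ s → ∀ t ∈ s,
      HasDerivAt φ (deriv φ t) t := by
    intro φ hφ t ht
    exact ((hφ.contDiffAt (hs.mem_nhds ht)).differentiableAt (by simp)).hasDerivAt
  have hd' : ∀ (φ : ℝ → ℝ), ContDiffOn ℝ (⊤ : ℕ∞) φ s →
      HasDerivAt (deriv φ) (deriv (deriv φ) 0) 0 := by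
    intro φ hφ
    exact (((hφ.deriv_of_isOpen hs (m := 1) (by exact WithTop.coe_le_coe.mpr le_top)).contDiffAt
      (hs.mem_nhds h0)).differentiableAt (by simp)).hasDerivAt
  set q : ℝ → ℝ := fun t => e t * g t - f t ^ 2 - l t ^ 2 with hq
  set r : ℝ → ℝ := fun t =>
    deriv e t * g t + e t * deriv g t
      - 2 * f t ^ 1 * deriv f t - 2 * l t ^ 1 * deriv l t with hr
  have hqr : ∀ t ∈ s, deriv q t = r t := by
    intro t ht
    have : HasDerivAt q (r t) t := by
      exact (((hd e he t ht).mul (hd g hg t ht)).sub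
        ((hd f hf t ht).pow 2)).sub ((hd l hl t ht).pow 2)
    exact this.deriv
  have hsnhds : s ∈ 𝓝 (0:ℝ) := hs.mem_nhds h0
  have hq0 : q =ᶠ[𝓝 (0:ℝ)] fun _ => 0 := by
    filter_upwards [hsnhds] with t ht
    simp only [hq, hid t ht]; ring
  have hdq0 : deriv q =ᶠ[𝓝 (0:ℝ)] deriv (fun _ => (0:ℝ)) := hq0.deriv
  have hdqr : deriv q =ᶠ[𝓝 (0:ℝ)] r := by
    filter_upwards [hsnhds] with t ht using hqr t ht
  have hr0 : r =ᶠ[𝓝 (0:ℝ)] fun _ => (0:ℝ) := by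
    filter_upwards [hdq0, hdqr] with t h1 h2
    rw [← h2, h1]; simp
  have hdr0 : deriv r 0 = 0 := by
    have := hr0.deriv_eq
    rw [this]; simp
  -- now compute deriv r 0 explicitly
  have hR : HasDerivAt r
      (deriv (deriv e) 0 * g 0 + deriv e 0 * deriv g 0
        + (deriv e 0 * deriv g 0 + e 0 * deriv (deriv g) 0)
        - (2 * ((1:ℕ) * f 0 ^ 0 * deriv f 0) * deriv f 0
            + 2 * f 0 ^ 1 * deriv (deriv f) 0)
        - (2 * ((1:ℕ) * l 0 ^ 0 * deriv l 0) * deriv l 0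
            + 2 * l 0 ^ 1 * deriv (deriv l) 0)) 0 := by
    exact ((((hd' e he).mul (hd g hg 0 h0)).add
        ((hd e he 0 h0).mul (hd' g hg))).sub
        ((((hd f hf 0 h0).pow 1).const_mul 2).mul (hd' f hf))).sub
        ((((hd l hl 0 h0).pow 1).const_mul 2).mul (hd' l hl))
  have := hR.deriv
  rw [hdr0] at this
  simp only [hf0, hg0, hg1, hl0] at this
  norm_num at this
  nlinarith [this]

/-- Directional reduction: second derivative along line `t ↦ t • w`. -/
lemma dir_red (w : R2) (U : Set R2) (hU : IsOpen U) (h0 : (0, 0) ∈ U)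
    (E F G lam : R2 → ℝ)
    (hE : ContDiffOn ℝ (⊤ : ℕ∞) E U) (hF : ContDiffOn ℝ (⊤ : ℕ∞) F U)
    (hG : ContDiffOn ℝ (⊤ : ℕ∞) G U) (hlam : ContDiffOn ℝ (⊤ : ℕ∞) lam U)
    (hF0 : F (0, 0) = 0) (hG0 : G (0, 0) = 0)
    (hGw : fderiv ℝ G (0, 0) w = 0)
    (hl0 : lam (0, 0) = 0)
    (hsq : ∀ p ∈ U, E p * G p - F p ^ 2 = lam p ^ 2) :
    2 * (fderiv ℝ lam (0, 0) w) ^ 2 =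
      E (0, 0) * fderiv ℝ (fun p => fderiv ℝ G p w) (0, 0) w
        - 2 * (fderiv ℝ F (0, 0) w) ^ 2 := by
  set c : ℝ → R2 := fun t => t • w with hcdef
  have hc0 : c 0 = (0, 0) := by simp [hcdef]; rfl
  have hcsmooth : ContDiff ℝ (⊤ : ℕ∞) c := contDiff_id.smul contDiff_const
  have hcder : ∀ t : ℝ, HasDerivAt c w t := by
    intro t
    simpa using (hasDerivAt_id t).smul_const w
  set s : Set ℝ := c ⁻¹' U with hsdef
  have hsopen : IsOpen s := hU.preimage hcsmooth.continuous
  have hs0 : (0:ℝ) ∈ s := by simp only [hsdef, Set.mem_preimage, hc0]; exact h0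
  -- composition facts
  have hcomp : ∀ (φ : R2 → ℝ), ContDiffOn ℝ (⊤ : ℕ∞) φ U →
      ContDiffOn ℝ (⊤ : ℕ∞) (φ ∘ c) s := by
    intro φ hφ
    exact hφ.comp hcsmooth.contDiffOn (Set.mapsTo_preimage c U)
  have hder : ∀ (φ : R2 → ℝ), ContDiffOn ℝ (⊤ : ℕ∞) φ U → ∀ t ∈ s,
      deriv (φ ∘ c) t = fderiv ℝ φ (c t) w := by
    intro φ hφ t ht
    have hdφ : DifferentiableAt ℝ φ (c t) :=
      (hφ.contDiffAt (hU.mem_nhds ht)).differentiableAt (by simp)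
    exact (hdφ.hasFDerivAt.comp_hasDerivAt t (hcder t)).deriv
  have hDw : ∀ (φ : R2 → ℝ), ContDiffOn ℝ (⊤ : ℕ∞) φ U →
      ContDiffOn ℝ (⊤ : ℕ∞) (fun p => fderiv ℝ φ p w) U := by
    intro φ hφ
    exact (hφ.fderiv_of_isOpen hU (by simp)).clm_apply contDiffOn_const
  have hder2 : ∀ (φ : R2 → ℝ), ContDiffOn ℝ (⊤ : ℕ∞) φ U →
      deriv (deriv (φ ∘ c)) 0 = fderiv ℝ (fun p => fderiv ℝ φ p w) (0, 0) w := by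
    intro φ hφ
    have hev : deriv (φ ∘ c) =ᶠ[𝓝 (0:ℝ)] ((fun p => fderiv ℝ φ p w) ∘ c) := by
      filter_upwards [hsopen.mem_nhds hs0] with t ht using hder φ hφ t ht
    rw [hev.deriv_eq, hder (fun p => fderiv ℝ φ p w) (hDw φ hφ) 0 hs0, hc0]
  have key := key1 s hsopen hs0 (E ∘ c) (F ∘ c) (G ∘ c) (lam ∘ c)
    (hcomp E hE) (hcomp F hF) (hcomp G hG) (hcomp lam hlam)
    (by rw [Function.comp_apply, hc0]; exact hF0)
    (by rw [Function.comp_apply, hc0]; exact hG0)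
    (by rw [hder G hG 0 hs0, hc0]; exact hGw)
    (by rw [Function.comp_apply, hc0]; exact hl0)
    (fun t ht => hsq (c t) ht)
  rw [hder lam hlam 0 hs0, hder F hF 0 hs0, hder2 G hG, hc0] at key
  simpa [Function.comp, hc0] using key

/-- if `F(p) = G(p) = 0`, `G_u(p) = G_v(p) = 0`, `λ(p) = 0` and
`EG − F² = λ²` holds identically on a neighborhood of `p = (0,0)`, then
`2λ_u(p)² = E(p)G_uu(p) − 2F_u(p)²` and `2λ_v(p)² = E(p)G_vv(p) − 2F_v(p)²`. -/
theorem stmt_6 (U : Set R2) (hU : IsOpen U) (h0 : (0, 0) ∈ U)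
    (E F G lam : R2 → ℝ)
    (hE : ContDiffOn ℝ (⊤ : ℕ∞) E U) (hF : ContDiffOn ℝ (⊤ : ℕ∞) F U)
    (hG : ContDiffOn ℝ (⊤ : ℕ∞) G U) (hlam : ContDiffOn ℝ (⊤ : ℕ∞) lam U)
    (hF0 : F (0, 0) = 0) (hG0 : G (0, 0) = 0)
    (hGu : Du G (0, 0) = 0) (hGv : Dv G (0, 0) = 0)
    (hl0 : lam (0, 0) = 0)
    (hsq : ∀ p ∈ U, E p * G p - F p ^ 2 = lam p ^ 2) :
    2 * Du lam (0, 0) ^ 2 = E (0, 0) * Du (Du G) (0, 0) - 2 * Du F (0, 0) ^ 2 ∧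
    2 * Dv lam (0, 0) ^ 2 = E (0, 0) * Dv (Dv G) (0, 0) - 2 * Dv F (0, 0) ^ 2 := by
  constructor
  · exact dir_red (1, 0) U hU h0 E F G lam hE hF hG hlam hF0 hG0 hGu hl0 hsq
  · exact dir_red (0, 1) U hU h0 E F G lam hE hF hG hlam hF0 hG0 hGv hl0 hsq

end
end

section
/- Let ds² = E du² + G dv² be a Kossowski metric in K-orthogonal coordinates on U with area density λ (so G = λ²/E, E > 0), and define the coherent-tangent-bundle frame by φ(∂_u) = ρ e₁ and φ(∂_v) = (λ/ρ) e₂ with ρ = √E, and ∇_{∂_u} e₁ = α e₂, ∇_{∂_v} e₁ = β e₂ for a metric connection ∇. Then the Codazzi-type condition ∇_{∂_u} φ(∂_v) = ∇_{∂_v} φ(∂_u) holds if and only if α = −E_v/(2λ) and β = (2Eλ_u − λE_u)/(2E²). -/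
noncomputable section

/-- The covariant derivative `∇_{∂_u}` of a section `s = s₁ e₁ + s₂ e₂` (written in
components w.r.t. the orthonormal frame `(e₁,e₂)`), where `∇_{∂_u} e₁ = α e₂` and
`∇_{∂_u} e₂ = −α e₁`. -/
def covDu (α : R2 → ℝ) (s : R2 → ℝ × ℝ) : R2 → ℝ × ℝ := fun p =>
  (Du (fun q => (s q).1) p - α p * (s p).2, Du (fun q => (s q).2) p + α p * (s p).1)

/-- The covariant derivative `∇_{∂_v}`, with `∇_{∂_v} e₁ = β e₂`, `∇_{∂_v} e₂ = −β e₁`. -/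
def covDv (β : R2 → ℝ) (s : R2 → ℝ × ℝ) : R2 → ℝ × ℝ := fun p =>
  (Dv (fun q => (s q).1) p - β p * (s p).2, Dv (fun q => (s q).2) p + β p * (s p).1)

lemma fd_sq (g : R2 → ℝ) (p : R2) (w : R2) (hg : DifferentiableAt ℝ g p) :
    fderiv ℝ (fun q => g q ^ 2) p w = 2 * g p * fderiv ℝ g p w := by
  have h : (fun q => g q ^ 2) = fun q => g q * g q := by ext q; ring
  rw [h, fderiv_fun_mul hg hg]
  simp
  ring

lemma fd_div (f g : R2 → ℝ) (p : R2) (w : R2) (hf : DifferentiableAt ℝ f p)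
    (hg : DifferentiableAt ℝ g p) (h0 : g p ≠ 0) :
    fderiv ℝ (fun q => f q / g q) p w
      = (fderiv ℝ f p w * g p - f p * fderiv ℝ g p w) / g p ^ 2 := by
  have hinv : HasFDerivAt (fun q => (g q)⁻¹)
      (((ContinuousLinearMap.smulRight (1 : ℝ →L[ℝ] ℝ) (-(g p ^ 2)⁻¹)).comp
        (fderiv ℝ g p))) p :=
    (hasFDerivAt_inv h0).comp p hg.hasFDerivAt
  have hdiv : HasFDerivAt (fun q => f q / g q)
      (f p • ((ContinuousLinearMap.smulRight (1 : ℝ →L[ℝ] ℝ) (-(g p ^ 2)⁻¹)).comp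
        (fderiv ℝ g p)) + (g p)⁻¹ • fderiv ℝ f p) p := by
    simpa [div_eq_mul_inv] using hf.hasFDerivAt.fun_mul hinv
  rw [hdiv.fderiv]
  simp [ContinuousLinearMap.comp_apply]
  field_simp
  ring

/-- for the bundle homomorphism `φ(∂_u) = ρ e₁`, `φ(∂_v) = (λ/ρ) e₂`
(`ρ = √E`, `E = ρ²` and `G = λ²/E`), the Codazzi-type condition
`∇_{∂_u} φ(∂_v) = ∇_{∂_v} φ(∂_u)` holds on `U` iff `α = −E_v/(2λ)` and
`β = (2Eλ_u − λE_u)/(2E²)` on `U` (written with cleared denominators, equivalently,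
since `E > 0`). -/
theorem stmt_11 (U : Set R2) (hU : IsOpen U)
    (ρ lam α β : R2 → ℝ)
    (hρ : ContDiffOn ℝ (⊤ : ℕ∞) ρ U) (hlam : ContDiffOn ℝ (⊤ : ℕ∞) lam U)
    (hρpos : ∀ p ∈ U, 0 < ρ p) :
    (∀ p ∈ U, covDu α (fun q => (0, lam q / ρ q)) p = covDv β (fun q => (ρ q, 0)) p)
    ↔ (∀ p ∈ U,
        2 * lam p * α p = -(Dv (fun q => ρ q ^ 2) p) ∧
        2 * (ρ p ^ 2) ^ 2 * β p =
          2 * ρ p ^ 2 * Du lam p - lam p * Du (fun q => ρ q ^ 2) p) := by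
  refine forall₂_congr fun p hp => ?_
  have hρd : DifferentiableAt ℝ ρ p :=
    (hρ.contDiffAt (hU.mem_nhds hp)).differentiableAt (by simp)
  have hlamd : DifferentiableAt ℝ lam p :=
    (hlam.contDiffAt (hU.mem_nhds hp)).differentiableAt (by simp)
  have h0 : ρ p ≠ 0 := (hρpos p hp).ne'
  have hsqu : Du (fun q => ρ q ^ 2) p = 2 * ρ p * Du ρ p := fd_sq ρ p (1, 0) hρd
  have hsqv : Dv (fun q => ρ q ^ 2) p = 2 * ρ p * Dv ρ p := fd_sq ρ p (0, 1) hρd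
  have hdivu : Du (fun q => lam q / ρ q) p
      = (Du lam p * ρ p - lam p * Du ρ p) / ρ p ^ 2 := fd_div lam ρ p (1, 0) hlamd hρd h0
  simp only [covDu, covDv, Prod.mk.injEq, Du, Dv, fderiv_const_apply,
    ContinuousLinearMap.zero_apply] at *
  have he : (fun q => ρ q) = ρ := rfl
  rw [he, hsqu, hsqv, hdivu]
  have h4 : ρ p ^ 2 ≠ 0 := pow_ne_zero 2 h0
  constructor
  · rintro ⟨h1, h2⟩
    have h1' : fderiv ℝ ρ p (0, 1) = -(α p * (lam p / ρ p)) := by linarith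
    have h2' : (fderiv ℝ lam p (1, 0) * ρ p - lam p * fderiv ℝ ρ p (1, 0)) / ρ p ^ 2
        = β p * ρ p := by linarith
    constructor
    · rw [h1']; field_simp
    · field_simp at h2'
      linear_combination (-2 * ρ p) * h2'
  · rintro ⟨h1, h2⟩
    have h1' : fderiv ℝ ρ p (0, 1) * ρ p = -(lam p * α p) := by
      apply mul_left_cancel₀ (two_ne_zero (α := ℝ))
      linear_combination h1
    have h2' : fderiv ℝ lam p (1, 0) * ρ p - lam p * fderiv ℝ ρ p (1, 0)
        = β p * ρ p * ρ p ^ 2 := by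
      apply mul_left_cancel₀ (mul_ne_zero two_ne_zero h0)
      linear_combination -h2
    constructor
    · have : fderiv ℝ ρ p (0, 1) = -(lam p * α p) / ρ p := by
        rw [eq_div_iff h0]; linear_combination h1'
      rw [this]; field_simp
      ring
    · have hdd : (fderiv ℝ lam p (1, 0) * ρ p - lam p * fderiv ℝ ρ p (1, 0)) / ρ p ^ 2
          = β p * ρ p := by rw [div_eq_iff h4]; linear_combination h2'
      rw [hdd]; ring

end
end

section
/- For a metric ds² = ê² du² + ĝ² dv² (ê, ĝ > 0 smooth) with Gaussian curvature K = −(1/(êĝ))((ĝ_u/ê)_u + (ê_v/ĝ)_v), take ê = ρ = e^{v²h(u,v)}, ĝ = λ/ρ with λ = v e^{k(u,v)}. Then the 2-form Ω = K λ du∧dv extends smoothly across the u-axis and satisfies Ω(u,0) = e^{−k(u,0)} (2h(u,0)k_v(u,0) − 3h_v(u,0)) du∧dv. -/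
noncomputable section

/-- `ê = ρ = exp(v²h)`. -/
def kE (h : R2 → ℝ) : R2 → ℝ := fun p => Real.exp (p.2 ^ 2 * h p)

/-- `λ = v e^k`. -/
def kL (k : R2 → ℝ) : R2 → ℝ := fun p => p.2 * Real.exp (k p)

/-- `ĝ = λ/ρ`. -/
def kG (h k : R2 → ℝ) : R2 → ℝ := fun p => kL k p / kE h p

/-- The Gaussian curvature of the orthogonal metric `ê²du² + ĝ²dv²`:
`K = −(1/(êĝ))((ĝ_u/ê)_u + (ê_v/ĝ)_v)` (valid where `v ≠ 0`). -/
def kK (h k : R2 → ℝ) : R2 → ℝ := fun p =>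
  -(1 / (kE h p * kG h k p)) *
    (Du (fun q => Du (kG h k) q / kE h q) p + Dv (fun q => Dv (kE h) q / kG h k q) p)

/-! ### Auxiliary lemmas -/

section Aux

lemma contDiff_Du {f : R2 → ℝ} (hf : ContDiff ℝ (⊤ : ℕ∞) f) : ContDiff ℝ (⊤ : ℕ∞) (Du f) :=
  (ContinuousLinearMap.apply ℝ ℝ ((1 : ℝ), (0 : ℝ))).contDiff.comp (hf.fderiv_right (by simp))

lemma contDiff_Dv {f : R2 → ℝ} (hf : ContDiff ℝ (⊤ : ℕ∞) f) : ContDiff ℝ (⊤ : ℕ∞) (Dv f) :=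
  (ContinuousLinearMap.apply ℝ ℝ ((0 : ℝ), (1 : ℝ))).contDiff.comp (hf.fderiv_right (by simp))

lemma dAt {f : R2 → ℝ} (hf : ContDiff ℝ (⊤ : ℕ∞) f) (p : R2) : DifferentiableAt ℝ f p :=
  hf.differentiable (by simp) p

lemma fda_mul {f g : R2 → ℝ} {p : R2} (w : R2)
    (hf : DifferentiableAt ℝ f p) (hg : DifferentiableAt ℝ g p) :
    fderiv ℝ (fun q => f q * g q) p w = fderiv ℝ f p w * g p + f p * fderiv ℝ g p w := by
  rw [fderiv_fun_mul hf hg]; simp; ring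

lemma fda_add {f g : R2 → ℝ} {p : R2} (w : R2)
    (hf : DifferentiableAt ℝ f p) (hg : DifferentiableAt ℝ g p) :
    fderiv ℝ (fun q => f q + g q) p w = fderiv ℝ f p w + fderiv ℝ g p w := by
  rw [fderiv_fun_add hf hg]; simp

lemma fda_sub {f g : R2 → ℝ} {p : R2} (w : R2)
    (hf : DifferentiableAt ℝ f p) (hg : DifferentiableAt ℝ g p) :
    fderiv ℝ (fun q => f q - g q) p w = fderiv ℝ f p w - fderiv ℝ g p w := by
  rw [fderiv_fun_sub hf hg]; simp

lemma fda_exp {f : R2 → ℝ} {p : R2} (w : R2) (hf : DifferentiableAt ℝ f p) :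
    fderiv ℝ (fun q => Real.exp (f q)) p w = Real.exp (f p) * fderiv ℝ f p w := by
  rw [fderiv_exp hf]; simp

lemma fda_cmul {f : R2 → ℝ} {p : R2} (c : ℝ) (w : R2) (hf : DifferentiableAt ℝ f p) :
    fderiv ℝ (fun q => c * f q) p w = c * fderiv ℝ f p w := by
  rw [fderiv_const_mul hf]; simp

lemma fda_snd (p w : R2) : fderiv ℝ (fun q : R2 => q.2) p w = w.2 := by
  rw [fderiv_snd]; rfl

lemma fda_snd_sq (p w : R2) : fderiv ℝ (fun q : R2 => q.2 ^ 2) p w = 2 * p.2 * w.2 := by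
  have h1 : (fun q : R2 => q.2 ^ 2) = fun q : R2 => q.2 * q.2 := by ext q; ring
  rw [h1, fda_mul w differentiable_snd.differentiableAt differentiable_snd.differentiableAt,
    fda_snd]
  ring

end Aux

/-- `ĝ_u/ê = v(k_u − v²h_u)e^{k−2v²h}`. -/
def FF (h k : R2 → ℝ) : R2 → ℝ := fun p =>
  p.2 * ((Du k p - p.2 ^ 2 * Du h p) * Real.exp (k p - 2 * (p.2 ^ 2 * h p)))

/-- `ê_v/ĝ = (2h + v h_v)e^{2v²h−k}`. -/
def GG (h k : R2 → ℝ) : R2 → ℝ := fun p =>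
  (2 * h p + p.2 * Dv h p) * Real.exp (2 * (p.2 ^ 2 * h p) - k p)

/-- The smooth extension `Ω = −((ĝ_u/ê)_u + (ê_v/ĝ)_v)`. -/
def OM (h k : R2 → ℝ) : R2 → ℝ := fun p => -(Du (FF h k) p + Dv (GG h k) p)

section Main

variable {h k : R2 → ℝ} (hh : ContDiff ℝ (⊤ : ℕ∞) h) (hk : ContDiff ℝ (⊤ : ℕ∞) k)

include hh hk

lemma contDiff_FF : ContDiff ℝ (⊤ : ℕ∞) (FF h k) := by
  unfold FF
  exact contDiff_snd.mul
    (((contDiff_Du hk).sub ((contDiff_snd.pow 2).mul (contDiff_Du hh))).mul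
      ((hk.sub (contDiff_const.mul ((contDiff_snd.pow 2).mul hh))).exp))

lemma contDiff_GG : ContDiff ℝ (⊤ : ℕ∞) (GG h k) := by
  unfold GG
  exact ((contDiff_const.mul hh).add (contDiff_snd.mul (contDiff_Dv hh))).mul
    (((contDiff_const.mul ((contDiff_snd.pow 2).mul hh)).sub hk).exp)

lemma contDiff_OM : ContDiff ℝ (⊤ : ℕ∞) (OM h k) :=
  ((contDiff_Du (contDiff_FF hh hk)).add (contDiff_Dv (contDiff_GG hh hk))).neg

omit hh hk in
lemma kG_eq : kG h k = fun p => p.2 * Real.exp (k p - p.2 ^ 2 * h p) := by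
  funext p
  rw [kG, kL, kE, mul_div_assoc, ← Real.exp_sub]

lemma Du_kG (p : R2) :
    Du (kG h k) p =
      p.2 * ((Du k p - p.2 ^ 2 * Du h p) * Real.exp (k p - p.2 ^ 2 * h p)) := by
  have dh := dAt hh
  have dk := dAt hk
  have dsq : ∀ q : R2, DifferentiableAt ℝ (fun q : R2 => q.2 ^ 2) q := fun q =>
    (differentiable_snd.differentiableAt).pow 2
  have dinner : DifferentiableAt ℝ (fun q => k q - q.2 ^ 2 * h q) p :=
    (dk p).sub ((dsq p).mul (dh p))
  rw [kG_eq]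
  simp only [Du]
  rw [fda_mul (1, 0) differentiable_snd.differentiableAt dinner.exp,
    fda_exp (1, 0) dinner, fda_sub (1, 0) (dk p) ((dsq p).fun_mul (dh p)),
    fda_mul (1, 0) (dsq p) (dh p), fda_snd, fda_snd_sq]
  simp only [Du]
  ring

lemma first_eq : (fun q => Du (kG h k) q / kE h q) = FF h k := by
  funext q
  rw [Du_kG hh hk]
  simp only [kE, FF]
  rw [ div_eq_iff (Real.exp_ne_zero _)]
  have e1 : Real.exp (k q - 2 * (q.2 ^ 2 * h q)) * Real.exp (q.2 ^ 2 * h q) =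
      Real.exp (k q - q.2 ^ 2 * h q) := by
    rw [← Real.exp_add]; ring_nf
  linear_combination (-(q.2 * (Du k q - q.2 ^ 2 * Du h q))) * e1

lemma Dv_kE (p : R2) :
    Dv (kE h) p = (2 * p.2 * h p + p.2 ^ 2 * Dv h p) * Real.exp (p.2 ^ 2 * h p) := by
  have dh := dAt hh
  have dsq : DifferentiableAt ℝ (fun q : R2 => q.2 ^ 2) p :=
    (differentiable_snd.differentiableAt).pow 2
  rw [show kE h = (fun q : R2 => Real.exp (q.2 ^ 2 * h q)) from rfl]
  simp only [Dv]
  rw [fda_exp (0, 1) (dsq.fun_mul (dh p)), fda_mul (0, 1) dsq (dh p), fda_snd_sq]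
  simp only [Dv]
  ring

lemma second_eqOn {q : R2} (hq : q.2 ≠ 0) :
    Dv (kE h) q / kG h k q = GG h k q := by
  rw [Dv_kE hh hk, kG_eq]
  simp only [GG]
  rw [
    div_eq_iff (mul_ne_zero hq (Real.exp_ne_zero _))]
  have e2 : Real.exp (2 * (q.2 ^ 2 * h q) - k q) * Real.exp (k q - q.2 ^ 2 * h q) =
      Real.exp (q.2 ^ 2 * h q) := by
    rw [← Real.exp_add]; ring_nf
  linear_combination (-((2 * h q + q.2 * Dv h q) * q.2)) * e2

omit hh hk in
lemma Dv_congr {f g : R2 → ℝ} {p : R2} (hfg : f =ᶠ[nhds p] g) : Dv f p = Dv g p := by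
  simp only [Dv]; rw [hfg.fderiv_eq]

lemma second_eq {p : R2} (hp : p.2 ≠ 0) :
    Dv (fun q => Dv (kE h) q / kG h k q) p = Dv (GG h k) p := by
  have hs : IsOpen {q : R2 | q.2 ≠ 0} := isOpen_ne.preimage continuous_snd
  have hev : (fun q => Dv (kE h) q / kG h k q) =ᶠ[nhds p] GG h k :=
    Filter.eventuallyEq_of_mem (hs.mem_nhds hp) (fun q hq => second_eqOn hh hk hq)
  exact Dv_congr hev

lemma OM_eq_K {p : R2} (hp : p.2 ≠ 0) : OM h k p = kK h k p * kL k p := by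
  have hEG : kE h p * kG h k p = kL k p := by
    rw [kG]; field_simp [kE]
  have hL : kL k p ≠ 0 := mul_ne_zero hp (Real.exp_ne_zero _)
  simp only [kK, OM]
  rw [hEG, first_eq hh hk, second_eq hh hk hp]
  field_simp

lemma Du_FF_zero (u : ℝ) : Du (FF h k) (u, 0) = 0 := by
  have dpsi : DifferentiableAt ℝ
      (fun q : R2 => (Du k q - q.2 ^ 2 * Du h q) * Real.exp (k q - 2 * (q.2 ^ 2 * h q)))
      (u, 0) :=
    dAt (((contDiff_Du hk).sub ((contDiff_snd.pow 2).mul (contDiff_Du hh))).mul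
      ((hk.sub (contDiff_const.mul ((contDiff_snd.pow 2).mul hh))).exp)) (u, 0)
  rw [show Du (FF h k) (u, 0) = fderiv ℝ (fun q : R2 => q.2 * ((Du k q - q.2 ^ 2 * Du h q) * Real.exp (k q - 2 * (q.2 ^ 2 * h q)))) (u, 0) (1, 0) from rfl]
  rw [fda_mul (1, 0) differentiable_snd.differentiableAt dpsi, fda_snd]
  norm_num

lemma Dv_GG_zero (u : ℝ) :
    Dv (GG h k) (u, 0) =
      Real.exp (-k (u, 0)) * (3 * Dv h (u, 0) - 2 * h (u, 0) * Dv k (u, 0)) := by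
  set p : R2 := (u, 0) with hpdef
  have dh := dAt hh
  have dk := dAt hk
  have dDvh := dAt (contDiff_Dv hh)
  have dsnd : DifferentiableAt ℝ (fun q : R2 => q.2) p := differentiable_snd.differentiableAt
  have dsq : DifferentiableAt ℝ (fun q : R2 => q.2 ^ 2) p :=
    (differentiable_snd.differentiableAt).pow 2
  have dA : DifferentiableAt ℝ (fun q : R2 => 2 * h q + q.2 * Dv h q) p :=
    ((differentiableAt_const _).mul (dh p)).add (dsnd.mul (dDvh p))
  have dB : DifferentiableAt ℝ (fun q : R2 => 2 * (q.2 ^ 2 * h q) - k q) p :=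
    ((differentiableAt_const _).mul (dsq.mul (dh p))).sub (dk p)
  rw [show Dv (GG h k) p = fderiv ℝ (fun q : R2 => (2 * h q + q.2 * Dv h q) * Real.exp (2 * (q.2 ^ 2 * h q) - k q)) p (0, 1) from rfl]
  rw [fda_mul (0, 1) dA dB.exp,
    fda_add (0, 1) ((differentiableAt_const _).fun_mul (dh p)) (dsnd.fun_mul (dDvh p)),
    fda_cmul 2 (0, 1) (dh p), fda_mul (0, 1) dsnd (dDvh p), fda_snd,
    fda_exp (0, 1) dB,
    fda_sub (0, 1) ((differentiableAt_const _).fun_mul (dsq.fun_mul (dh p))) (dk p),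
    fda_cmul 2 (0, 1) (dsq.fun_mul (dh p)), fda_mul (0, 1) dsq (dh p), fda_snd_sq]
  simp only [Dv, hpdef]
  norm_num
  ring

end Main

/-- for `ê = e^{v²h}`, `ĝ = λ/ê` with `λ = v e^k`, the 2-form density
`Ω = Kλ` extends smoothly across the `u`-axis and its value there is
`Ω(u,0) = e^{−k(u,0)}(2h(u,0)k_v(u,0) − 3h_v(u,0))`. -/
theorem stmt_17 (h k : R2 → ℝ) (hh : ContDiff ℝ (⊤ : ℕ∞) h) (hk : ContDiff ℝ (⊤ : ℕ∞) k) :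
    ∃ Ω : R2 → ℝ, ContDiff ℝ (⊤ : ℕ∞) Ω ∧
      (∀ p : R2, p.2 ≠ 0 → Ω p = kK h k p * kL k p) ∧
      (∀ u : ℝ, Ω (u, 0) =
        Real.exp (-k (u, 0)) *
          (2 * h (u, 0) * Dv k (u, 0) - 3 * Dv h (u, 0))) := by
  refine ⟨OM h k, contDiff_OM hh hk, fun p hp => OM_eq_K hh hk hp, fun u => ?_⟩
  simp only [OM]
  rw [Du_FF_zero hh hk u, Dv_GG_zero hh hk u]
  ring

end
end
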